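/- arXiv:math/0307403 — 2 statements merged into one kernel-verified Lean document; each statement's English description precedes it below -/
import Mathlib

section
/- A grafted simplicial complex is unmixed with vertex covering number r: if Δ = ⟨F₁, …, F_r⟩ ∪ ⟨G₁, …, G_s⟩ is a grafting, then every minimal vertex cover of Δ has cardinality exactly r. -/
open Finset

variable {α : Type*} [DecidableEq α]

/-- A set of vertices meeting every facet. -/
def IsVertexCover (Δ : Finset (Finset α)) (A : Finset α) : Prop :=
  ∀ F ∈ Δ, (A ∩ F).Nonempty

/-- A vertex cover none of whose proper subsets is a cover. -/
def IsMinimalVertexCover (Δ : Finset (Finset α)) (A : Finset α) : Prop :=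
  IsVertexCover Δ A ∧ ∀ B ⊆ A, IsVertexCover Δ B → B = A

/-- The vertex covering number α(Δ). -/
noncomputable def coverNum (Δ : Finset (Finset α)) : ℕ :=
  sInf {n | ∃ A : Finset α, IsVertexCover Δ A ∧ A.card = n}

/-- All minimal vertex covers have the same cardinality. -/
def Unmixed (Δ : Finset (Finset α)) : Prop :=
  ∀ A B : Finset α, IsMinimalVertexCover Δ A → IsMinimalVertexCover Δ B →
    A.card = B.card

/-- `F` is a leaf of `Δ`: it is the only facet, or some facet `G ≠ F`
satisfies `F ∩ F' ⊆ F ∩ G` for every facet `F' ≠ F`. -/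
def IsLeaf (Δ : Finset (Finset α)) (F : Finset α) : Prop :=
  F ∈ Δ ∧ (Δ = {F} ∨ ∃ G ∈ Δ, G ≠ F ∧ ∀ F' ∈ Δ, F' ≠ F → F ∩ F' ⊆ F ∩ G)

/-- `G` is a joint of the leaf `F` in `Δ`. -/
def IsJoint (Δ : Finset (Finset α)) (G F : Finset α) : Prop :=
  F ∈ Δ ∧ G ∈ Δ ∧ G ≠ F ∧ (∀ F' ∈ Δ, F' ≠ F → F ∩ F' ⊆ F ∩ G) ∧
    (F ∩ G).Nonempty

def HasLeaf (Δ : Finset (Finset α)) : Prop := ∃ F, IsLeaf Δ F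

/-- Every nonempty subcollection has a leaf. -/
def IsForest (Δ : Finset (Finset α)) : Prop :=
  ∀ Γ ⊆ Δ, Γ.Nonempty → HasLeaf Γ

/-- Any two facets are linked by a chain of facets with consecutive
nonempty intersections. -/
def ComplexConnected (Δ : Finset (Finset α)) : Prop :=
  ∀ F ∈ Δ, ∀ G ∈ Δ,
    Relation.ReflTransGen (fun A B => A ∈ Δ ∧ B ∈ Δ ∧ (A ∩ B).Nonempty) F G

def IsTree (Δ : Finset (Finset α)) : Prop := ComplexConnected Δ ∧ IsForest Δ

/-- An independent (pairwise disjoint) set of facets of `Δ`. -/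
def IndependentFacets (Δ S : Finset (Finset α)) : Prop :=
  S ⊆ Δ ∧ ∀ F ∈ S, ∀ G ∈ S, F ≠ G → F ∩ G = ∅

/-- The independence number β(Δ). -/
noncomputable def indepNum (Δ : Finset (Finset α)) : ℕ :=
  sSup {n | ∃ S : Finset (Finset α), IndependentFacets Δ S ∧ S.card = n}

/-- An independent set of facets not properly contained in another. -/
def MaximalIndependent (Δ S : Finset (Finset α)) : Prop :=
  IndependentFacets Δ S ∧ ∀ T, IndependentFacets Δ T → S ⊆ T → T = S

/-- `v` is a free vertex of the facet `F`: it belongs to no other facet. -/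
def FreeVertex (Δ : Finset (Finset α)) (v : α) (F : Finset α) : Prop :=
  F ∈ Δ ∧ v ∈ F ∧ ∀ G ∈ Δ, v ∈ G → G = F

/-- The facets form an antichain (they are the maximal faces). -/
def FacetAntichain (Δ : Finset (Finset α)) : Prop :=
  ∀ F ∈ Δ, ∀ G ∈ Δ, F ⊆ G → F = G

/-- `Δ` is a grafting of `Gs` with the pairwise-disjoint simplices `Fs`:
(i) every vertex of each `G ∈ Gs` lies in some `F ∈ Fs`; (ii) `Fs` is
exactly the set of leaves of `Δ`; (iii) `Fs` and `Gs` are disjoint;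
(iv) the members of `Fs` are pairwise disjoint; (v) removing any joint
`G ∈ Gs` yields a grafted complex. -/
def IsGrafted (Δ Fs Gs : Finset (Finset α)) : Prop :=
  Δ = Fs ∪ Gs ∧
  (∀ G ∈ Gs, ∀ v ∈ G, ∃ F ∈ Fs, v ∈ F) ∧
  (∀ F, F ∈ Fs ↔ IsLeaf Δ F) ∧
  Disjoint Fs Gs ∧
  (∀ F ∈ Fs, ∀ F' ∈ Fs, F ≠ F' → F ∩ F' = ∅) ∧
  (∀ G, G ∈ Δ → G ∈ Gs → (∃ F, IsJoint Δ G F) →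
    ∃ Fs' Gs', IsGrafted (Δ.erase G) Fs' Gs')
termination_by Δ.card
decreasing_by exact Finset.card_erase_lt_of_mem (by assumption)

/-- Every vertex cover contains a minimal vertex cover. -/
lemma exists_minimal_subcover (Δ : Finset (Finset α)) :
    ∀ A : Finset α, IsVertexCover Δ A → ∃ B ⊆ A, IsMinimalVertexCover Δ B := by
  intro A
  induction A using Finset.strongInduction with
  | _ A ih =>
    intro h
    by_cases hmin : ∀ B ⊆ A, IsVertexCover Δ B → B = A
    · exact ⟨A, Finset.Subset.refl A, h, hmin⟩
    · push_neg at hmin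
      obtain ⟨B, hBA, hBc, hne⟩ := hmin
      obtain ⟨C, hCB, hC⟩ := ih B (Finset.ssubset_iff_subset_ne.mpr ⟨hBA, hne⟩) hBc
      exact ⟨C, hCB.trans hBA, hC⟩

/-- Leaf persistence: erasing a joint from a grafted complex keeps every old
leaf a leaf. -/
lemma leaf_persists (Δ Fs Gs : Finset (Finset α)) (hg : IsGrafted Δ Fs Gs)
    (G₀ : Finset α) (hG₀ : G₀ ∈ Gs) (hjoint : ∃ F₀, IsJoint Δ G₀ F₀) :
    ∀ F ∈ Fs, IsLeaf (Δ.erase G₀) F := by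
  have hg6 := hg
  rw [IsGrafted] at hg6
  obtain ⟨h1, h2, h3, h4, h5, h6⟩ := hg6
  have hG₀Δ : G₀ ∈ Δ := by rw [h1]; exact mem_union_right _ hG₀
  intro F hF
  by_contra hnot
  obtain ⟨hFΔ, hcase⟩ := (h3 F).mp hF
  have hFG₀ : F ≠ G₀ := fun he => (Finset.disjoint_left.mp h4 hF) (he ▸ hG₀)
  have hFΔ' : F ∈ Δ.erase G₀ := mem_erase.mpr ⟨hFG₀, hFΔ⟩
  rcases hcase with hsing | ⟨G, hGΔ, hGF, hdom⟩
  · rw [hsing] at hG₀Δ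
    exact hFG₀ (mem_singleton.mp hG₀Δ).symm
  by_cases hGG₀ : G = G₀
  case neg =>
    exact hnot ⟨hFΔ', Or.inr ⟨G, mem_erase.mpr ⟨hGG₀, hGΔ⟩, hGF,
      fun F' hF' hne => hdom F' (mem_of_mem_erase hF') hne⟩⟩
  case pos =>
  rw [hGG₀] at hdom
  by_cases hxG : (F ∩ G₀).Nonempty
  case neg =>
    rw [not_nonempty_iff_eq_empty] at hxG
    by_cases hex : ∃ H ∈ Δ.erase G₀, H ≠ F
    · obtain ⟨H, hHΔ', hHF⟩ := hex
      refine hnot ⟨hFΔ', Or.inr ⟨H, hHΔ', hHF, fun F' hF' hne a ha => ?_⟩⟩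
      exact absurd (hxG ▸ hdom F' (mem_of_mem_erase hF') hne ha) (notMem_empty a)
    · push_neg at hex
      exact hnot ⟨hFΔ', Or.inl (Finset.eq_singleton_iff_unique_mem.mpr
        ⟨hFΔ', fun H hH => hex H hH⟩)⟩
  case pos =>
  obtain ⟨x, hx⟩ := hxG
  have hxF : x ∈ F := (mem_inter.mp hx).1
  obtain ⟨Fs', Gs', hg'⟩ := h6 G₀ hG₀Δ hG₀ hjoint
  rw [IsGrafted] at hg'
  obtain ⟨h1', h2', h3', h4', h5', h6'⟩ := hg'
  have hFFs' : F ∉ Fs' := fun hm => hnot ((h3' F).mp hm)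
  have hFGs' : F ∈ Gs' := by
    have hmem : F ∈ Fs' ∪ Gs' := by rw [← h1']; exact hFΔ'
    exact (mem_union.mp hmem).resolve_left hFFs'
  obtain ⟨L, hLFs', hxL⟩ := h2' F hFGs' x hxF
  obtain ⟨hLΔ', hLcase⟩ := (h3' L).mp hLFs'
  have hLΔ : L ∈ Δ := mem_of_mem_erase hLΔ'
  have hLF : L ≠ F := fun he => hFFs' (he ▸ hLFs')
  have hLGs : L ∈ Gs := by
    have hmem : L ∈ Fs ∪ Gs := by rw [← h1]; exact hLΔ
    rcases mem_union.mp hmem with hLFs | h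
    · exfalso
      have hemp : F ∩ L = ∅ := h5 F hF L hLFs (fun he => hLF he.symm)
      have : x ∈ F ∩ L := mem_inter.mpr ⟨hxF, hxL⟩
      rw [hemp] at this
      exact notMem_empty x this
    · exact h
  have hLnotleaf : ¬ IsLeaf Δ L :=
    fun hl => (Finset.disjoint_left.mp h4 ((h3 L).mpr hl)) hLGs
  rcases hLcase with hsingL | ⟨W, hWΔ', hWL, hdomL⟩
  · rw [hsingL] at hFΔ'
    exact hLF (mem_singleton.mp hFΔ').symm
  have hWΔ : W ∈ Δ := mem_of_mem_erase hWΔ'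
  by_cases hall : ∀ F' ∈ Δ, F' ≠ L → L ∩ F' ⊆ L ∩ W
  · exact hLnotleaf ⟨hLΔ, Or.inr ⟨W, hWΔ, hWL, hall⟩⟩
  push_neg at hall
  obtain ⟨F₁, hF₁Δ, hF₁L, hnsub⟩ := hall
  have hF₁G₀ : F₁ = G₀ := by
    by_contra hne
    exact hnsub (hdomL F₁ (mem_erase.mpr ⟨hne, hF₁Δ⟩) hF₁L)
  rw [hF₁G₀] at hnsub
  obtain ⟨u, huLG₀, hunW⟩ := Finset.not_subset.mp hnsub
  have huL : u ∈ L := (mem_inter.mp huLG₀).1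
  have huG₀ : u ∈ G₀ := (mem_inter.mp huLG₀).2
  obtain ⟨Fh, hFhFs, huFh⟩ := h2 G₀ hG₀ u huG₀
  have hFhL : Fh ≠ L := fun he => (Finset.disjoint_left.mp h4 hFhFs) (he ▸ hLGs)
  have hFhG₀ : Fh ≠ G₀ := fun he => (Finset.disjoint_left.mp h4 hFhFs) (he ▸ hG₀)
  have hFhΔ' : Fh ∈ Δ.erase G₀ :=
    mem_erase.mpr ⟨hFhG₀, by rw [h1]; exact mem_union_left _ hFhFs⟩
  exact hunW (hdomL Fh hFhΔ' hFhL (mem_inter.mpr ⟨huL, huFh⟩))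

/-- Erasing a joint from a grafted complex preserves the leaf set. -/
lemma leaves_eq_of_erase_joint (Δ Fs Gs Fs' Gs' : Finset (Finset α)) (G₀ : Finset α)
    (hg : IsGrafted Δ Fs Gs) (hG₀ : G₀ ∈ Gs) (hjoint : ∃ F₀, IsJoint Δ G₀ F₀)
    (hg' : IsGrafted (Δ.erase G₀) Fs' Gs') : Fs' = Fs := by
  have hpers := leaf_persists Δ Fs Gs hg G₀ hG₀ hjoint
  rw [IsGrafted] at hg hg'
  obtain ⟨h1, h2, h3, h4, h5, h6⟩ := hg
  obtain ⟨h1', h2', h3', h4', h5', h6'⟩ := hg'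
  have hG₀Δ : G₀ ∈ Δ := by rw [h1]; exact mem_union_right _ hG₀
  ext L
  constructor
  · intro hL
    by_contra hLFs
    obtain ⟨hLΔ', _⟩ := (h3' L).mp hL
    have hLΔ : L ∈ Δ := mem_of_mem_erase hLΔ'
    have hLGs : L ∈ Gs := by
      have hmem : L ∈ Fs ∪ Gs := by rw [← h1]; exact hLΔ
      exact (mem_union.mp hmem).resolve_left hLFs
    have hG₀L : G₀ ≠ L := fun he => (notMem_erase G₀ Δ) (he ▸ hLΔ')
    have hLne : L.Nonempty := by
      rcases Finset.eq_empty_or_nonempty L with he | h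
      · exfalso
        apply hLFs
        apply (h3 L).mpr
        refine ⟨hLΔ, Or.inr ⟨G₀, hG₀Δ, hG₀L, fun F' _ _ a ha => ?_⟩⟩
        rw [he] at ha
        exact absurd (mem_inter.mp ha).1 (notMem_empty a)
      · exact h
    obtain ⟨v, hv⟩ := hLne
    obtain ⟨Fh, hFhFs, hvFh⟩ := h2 L hLGs v hv
    have hFhFs' : Fh ∈ Fs' := (h3' Fh).mpr (hpers Fh hFhFs)
    have hne : L ≠ Fh := fun he => hLFs (he ▸ hFhFs)
    have hemp : L ∩ Fh = ∅ := h5' L hL Fh hFhFs' hne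
    have : v ∈ L ∩ Fh := mem_inter.mpr ⟨hv, hvFh⟩
    rw [hemp] at this
    exact notMem_empty v this
  · intro hF
    exact (h3' L).mpr (hpers L hF)

lemma grafted_aux : ∀ (n : ℕ) (Δ Fs Gs : Finset (Finset α)), Δ.card ≤ n →
    IsGrafted Δ Fs Gs → ∀ A, IsMinimalVertexCover Δ A → A.card = Fs.card := by
  intro n
  induction n with
  | zero =>
    intro Δ Fs Gs hcard hg A hA
    have hΔ : Δ = ∅ := card_eq_zero.mp (Nat.le_zero.mp hcard)
    rw [IsGrafted] at hg
    have h1 := hg.1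
    rw [hΔ] at h1
    have hFs : Fs = ∅ := (Finset.union_eq_empty.mp h1.symm).1
    have hA0 : A = ∅ := (hA.2 ∅ (Finset.empty_subset A)
      (fun F hF => absurd hF (by rw [hΔ]; exact notMem_empty F))).symm
    rw [hA0, hFs]
    rfl
  | succ n ih =>
    intro Δ Fs Gs hcard hgc A hA
    have hg := hgc
    rw [IsGrafted] at hg
    obtain ⟨h1, h2, h3, h4, h5, h6⟩ := hg
    obtain ⟨hAcov, hAmin⟩ := hA
    -- every element of a minimal cover has a witness facet
    have hwit : ∀ a ∈ A, ∃ H ∈ Δ, A ∩ H = {a} := by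
      intro a ha
      by_cases hcov : IsVertexCover Δ (A.erase a)
      · exact absurd (hAmin (A.erase a) (erase_subset a A) hcov)
          (fun he => (notMem_erase a A) (by rw [he]; exact ha))
      · rw [IsVertexCover] at hcov
        push_neg at hcov
        obtain ⟨H, hHΔ, hH⟩ := hcov
        have hsub : A ∩ H ⊆ {a} := by
          intro b hb
          obtain ⟨hbA, hbH⟩ := mem_inter.mp hb
          by_contra hba
          rw [mem_singleton] at hba
          have : b ∈ (A.erase a) ∩ H :=
            mem_inter.mpr ⟨mem_erase.mpr ⟨hba, hbA⟩, hbH⟩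
          rw [hH] at this
          exact notMem_empty b this
        obtain ⟨c, hc⟩ := hAcov H hHΔ
        have hca : c = a := mem_singleton.mp (hsub hc)
        exact ⟨H, hHΔ, Finset.eq_singleton_iff_unique_mem.mpr
          ⟨hca ▸ hc, fun x hx => mem_singleton.mp (hsub hx)⟩⟩
    -- every element of the cover lies in some leaf
    have hAsub : ∀ a ∈ A, ∃ F ∈ Fs, a ∈ F := by
      intro a ha
      obtain ⟨H, hHΔ, hH⟩ := hwit a ha
      have haH : a ∈ H := (mem_inter.mp (hH ▸ mem_singleton_self a)).2
      have hmem : H ∈ Fs ∪ Gs := by rw [← h1]; exact hHΔ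
      rcases mem_union.mp hmem with h | h
      · exact ⟨H, h, haH⟩
      · exact h2 H h a haH
    by_cases hone : ∃ F ∈ Fs, ∃ x ∈ A ∩ F, ∃ y ∈ A ∩ F, x ≠ y
    case neg =>
      push_neg at hone
      have hcard1 : ∀ F ∈ Fs, (A ∩ F).card = 1 := by
        intro F hF
        obtain ⟨x, hx⟩ := hAcov F (by rw [h1]; exact mem_union_left _ hF)
        rw [card_eq_one]
        exact ⟨x, Finset.eq_singleton_iff_unique_mem.mpr
          ⟨hx, fun y hy => hone F hF y hy x hx⟩⟩
      have hAeq : A = Fs.biUnion (fun F => A ∩ F) := by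
        ext a
        simp only [mem_biUnion, mem_inter]
        constructor
        · intro ha
          obtain ⟨F, hF, haF⟩ := hAsub a ha
          exact ⟨F, hF, ha, haF⟩
        · rintro ⟨F, hF, ha, _⟩
          exact ha
      have hdisj : ∀ x ∈ Fs, ∀ y ∈ Fs, x ≠ y →
          Disjoint (A ∩ x) (A ∩ y) := by
        intro x hx y hy hxy
        have hemp := h5 x hx y hy hxy
        rw [Finset.disjoint_left]
        intro a ha ha'
        have : a ∈ x ∩ y := mem_inter.mpr ⟨(mem_inter.mp ha).2, (mem_inter.mp ha').2⟩
        rw [hemp] at this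
        exact notMem_empty a this
      rw [hAeq, card_biUnion hdisj]
      rw [Finset.sum_congr rfl hcard1]
      simp
    case pos =>
      obtain ⟨F, hFFs, x, hxAF, y, hyAF, hxy⟩ := hone
      have hFΔ : F ∈ Δ := by rw [h1]; exact mem_union_left _ hFFs
      obtain ⟨hxA, hxF⟩ := mem_inter.mp hxAF
      obtain ⟨hyA, hyF⟩ := mem_inter.mp hyAF
      obtain ⟨_, hc⟩ := (h3 F).mp hFFs
      have hDne : Δ ≠ {F} := by
        intro he
        have hcov : IsVertexCover Δ {x} := by
          intro H hH
          rw [he, mem_singleton] at hH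
          exact ⟨x, mem_inter.mpr ⟨mem_singleton_self x, hH ▸ hxF⟩⟩
        have heq := hAmin {x} (singleton_subset_iff.mpr hxA) hcov
        rw [← heq] at hyA
        exact hxy (mem_singleton.mp hyA).symm
      rcases hc with hs | ⟨G₀, hG₀Δ, hG₀F, hdom⟩
      · exact absurd hs hDne
      -- x and y belong to F ∩ G₀
      have hkey : ∀ z ∈ A ∩ F, z ∈ F ∩ G₀ := by
        intro z hz
        obtain ⟨hzA, hzF⟩ := mem_inter.mp hz
        obtain ⟨Hz, hHzΔ, hHz⟩ := hwit z hzA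
        have hHzF : Hz ≠ F := by
          intro he
          rw [he] at hHz
          have hx' : x ∈ ({z} : Finset α) := hHz ▸ hxAF
          have hy' : y ∈ ({z} : Finset α) := hHz ▸ hyAF
          exact hxy ((mem_singleton.mp hx').trans (mem_singleton.mp hy').symm)
        have hzHz : z ∈ Hz := (mem_inter.mp (hHz ▸ mem_singleton_self z)).2
        exact hdom Hz hHzΔ hHzF (mem_inter.mpr ⟨hzF, hzHz⟩)
      have hxFG₀ := hkey x hxAF
      have hyFG₀ := hkey y hyAF
      have hG₀Gs : G₀ ∈ Gs := by
        have hmem : G₀ ∈ Fs ∪ Gs := by rw [← h1]; exact hG₀Δ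
        rcases mem_union.mp hmem with h | h
        · exfalso
          have hemp : F ∩ G₀ = ∅ := h5 F hFFs G₀ h (fun he => hG₀F he.symm)
          rw [hemp] at hxFG₀
          exact notMem_empty x hxFG₀
        · exact h
      have hjoint : IsJoint Δ G₀ F := ⟨hFΔ, hG₀Δ, hG₀F, hdom, ⟨x, hxFG₀⟩⟩
      obtain ⟨Fs', Gs', hg'⟩ := h6 G₀ hG₀Δ hG₀Gs ⟨F, hjoint⟩
      have hFs'Fs : Fs' = Fs :=
        leaves_eq_of_erase_joint Δ Fs Gs Fs' Gs' G₀ hgc hG₀Gs ⟨F, hjoint⟩ hg'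
      have hAcov' : IsVertexCover (Δ.erase G₀) A :=
        fun H hH => hAcov H (mem_of_mem_erase hH)
      obtain ⟨B, hBA, hBmin⟩ := exists_minimal_subcover (Δ.erase G₀) A hAcov'
      have hcard' : (Δ.erase G₀).card ≤ n := by
        have hpos : 0 < Δ.card := card_pos.mpr ⟨G₀, hG₀Δ⟩
        rw [card_erase_of_mem hG₀Δ]
        omega
      have hBcard : B.card = Fs'.card := ih (Δ.erase G₀) Fs' Gs' hcard' hg' B hBmin
      have hins : ∀ z ∈ A, z ∈ G₀ → insert z B = A := by
        intro z hzA hzG₀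
        apply hAmin
        · exact insert_subset hzA hBA
        · intro H hHΔ
          by_cases hHG₀ : H = G₀
          · exact ⟨z, mem_inter.mpr ⟨mem_insert_self z B, hHG₀ ▸ hzG₀⟩⟩
          · obtain ⟨b, hb⟩ := hBmin.1 H (mem_erase.mpr ⟨hHG₀, hHΔ⟩)
            exact ⟨b, mem_inter.mpr
              ⟨mem_insert_of_mem (mem_inter.mp hb).1, (mem_inter.mp hb).2⟩⟩
      have hinsx := hins x hxA (mem_inter.mp hxFG₀).2
      have hinsy := hins y hyA (mem_inter.mp hyFG₀).2
      have hxB : x ∈ B := by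
        rw [← hinsy] at hxA
        exact (mem_insert.mp hxA).resolve_left hxy
      have hBeqA : B = A := by
        rw [← hinsx, Finset.insert_eq_self.mpr hxB]
      rw [← hBeqA, hBcard, hFs'Fs]

/-- A grafted simplicial complex is unmixed with vertex covering number `r`:
every minimal vertex cover has cardinality exactly the number of grafted
leaves. -/
theorem grafted_is_unmixed (Δ Fs Gs : Finset (Finset α))
    (hgraft : IsGrafted Δ Fs Gs) :
    ∀ A : Finset α, IsMinimalVertexCover Δ A → A.card = Fs.card :=
  grafted_aux Δ.card Δ Fs Gs le_rfl hgraft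
end

section
/- A grafting of a tree is a tree: if Δ' = ⟨G₁, …, G_s⟩ is a tree and Δ is a grafting of Δ' with simplices F₁, …, F_r, then Δ is a tree (assuming Δ is connected). -/
open Finset

variable {α : Type*} [DecidableEq α]

/-!
A subcollection `Γ ⊆ Δ` avoiding the simplices `Fs` lies in the tree `Gs` and so has a leaf.
Otherwise pick `F ∈ Γ ∩ Fs`; it is a leaf of `Δ`, with dominating facet `G`. If `G ∈ Γ`, or if
`F` meets no other facet, `F` is a leaf of `Γ`. Otherwise `G` is a joint of `F` lying in `Gs`,
and `Δ.erase G` is again grafted, with `F` still among its grafted simplices: a facet of `Gs`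
cannot become a leaf by removing `G`, because each vertex of `G` is covered by one of the `Fs`,
which survives the removal. Induction on the number of facets finishes the proof.
-/

theorem isLeaf_of_forall_inter_eq_empty {Γ : Finset (Finset α)} {F : Finset α} (hF : F ∈ Γ)
    (hdisj : ∀ F' ∈ Γ, F' ≠ F → F ∩ F' = ∅) : IsLeaf Γ F := by
  refine ⟨hF, or_iff_not_imp_left.2 fun hsing => ?_⟩
  obtain ⟨E, hE, hEF⟩ : ∃ E ∈ Γ, E ≠ F := by
    by_contra! h
    exact hsing (eq_singleton_iff_unique_mem.2 ⟨hF, h⟩)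
  exact ⟨E, hE, hEF, fun F' hF' hne => by simp [hdisj F' hF' hne]⟩

theorem isLeaf_of_isLeaf_erase {Δ : Finset (Finset α)} {G L : Finset α} (hG : G ∈ Δ)
    (hcov : ∀ v ∈ L ∩ G, ∃ F ∈ Δ, F ≠ G ∧ F ≠ L ∧ v ∈ F)
    (hL : IsLeaf (Δ.erase G) L) : IsLeaf Δ L := by
  obtain ⟨hLG, hLΔ⟩ := mem_erase.1 hL.1
  refine ⟨hLΔ, Or.inr ?_⟩
  rcases hL.2 with hsing | ⟨H, hH, hHL, hdom⟩
  · refine ⟨G, hG, hLG.symm, fun X hX hXL => ?_⟩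
    obtain rfl : X = G := by
      by_contra hXG
      exact hXL (mem_singleton.1 (hsing ▸ mem_erase.2 ⟨hXG, hX⟩))
    exact subset_rfl
  · refine ⟨H, mem_of_mem_erase hH, hHL, fun X hX hXL => ?_⟩
    rcases eq_or_ne X G with rfl | hXG
    · intro v hv
      obtain ⟨F, hF, hFX, hFL, hvF⟩ := hcov v hv
      exact hdom F (mem_erase.2 ⟨hFX, hF⟩) hFL
        (mem_inter.2 ⟨(mem_inter.1 hv).1, hvF⟩)
    · exact hdom X (mem_erase.2 ⟨hXG, hX⟩) hXL

namespace IsGrafted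

variable {Δ Fs Gs : Finset (Finset α)}

theorem eq_union (hg : IsGrafted Δ Fs Gs) : Δ = Fs ∪ Gs :=
  (IsGrafted.eq_1 Δ Fs Gs ▸ hg).1

theorem exists_mem_fs (hg : IsGrafted Δ Fs Gs) {G : Finset α} (hG : G ∈ Gs) {v : α}
    (hv : v ∈ G) : ∃ F ∈ Fs, v ∈ F :=
  (IsGrafted.eq_1 Δ Fs Gs ▸ hg).2.1 G hG v hv

theorem mem_fs_iff_isLeaf (hg : IsGrafted Δ Fs Gs) {F : Finset α} : F ∈ Fs ↔ IsLeaf Δ F :=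
  (IsGrafted.eq_1 Δ Fs Gs ▸ hg).2.2.1 F

theorem disjoint (hg : IsGrafted Δ Fs Gs) : Disjoint Fs Gs :=
  (IsGrafted.eq_1 Δ Fs Gs ▸ hg).2.2.2.1

theorem inter_eq_empty (hg : IsGrafted Δ Fs Gs) {F F' : Finset α} (hF : F ∈ Fs)
    (hF' : F' ∈ Fs) (hne : F ≠ F') : F ∩ F' = ∅ :=
  (IsGrafted.eq_1 Δ Fs Gs ▸ hg).2.2.2.2.1 F hF F' hF' hne

theorem exists_isGrafted_erase (hg : IsGrafted Δ Fs Gs) {G F : Finset α} (hG : G ∈ Gs)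
    (hjoint : IsJoint Δ G F) : ∃ Fs' Gs', IsGrafted (Δ.erase G) Fs' Gs' :=
  (IsGrafted.eq_1 Δ Fs Gs ▸ hg).2.2.2.2.2 G hjoint.2.1 hG ⟨F, hjoint⟩

theorem mem_of_mem_fs (hg : IsGrafted Δ Fs Gs) {F : Finset α} (hF : F ∈ Fs) : F ∈ Δ :=
  (hg.mem_fs_iff_isLeaf.1 hF).1

theorem mem_of_mem_gs (hg : IsGrafted Δ Fs Gs) {G : Finset α} (hG : G ∈ Gs) : G ∈ Δ :=
  hg.eq_union ▸ mem_union_right Fs hG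

theorem not_isLeaf_erase (hg : IsGrafted Δ Fs Gs) {G L : Finset α} (hG : G ∈ Gs)
    (hL : L ∈ Gs) : ¬IsLeaf (Δ.erase G) L := fun hleaf => by
  have hcov : ∀ v ∈ L ∩ G, ∃ F ∈ Δ, F ≠ G ∧ F ≠ L ∧ v ∈ F := fun v hv => by
    obtain ⟨F, hF, hvF⟩ := hg.exists_mem_fs hG (mem_inter.1 hv).2
    exact ⟨F, hg.mem_of_mem_fs hF, disjoint_iff_ne.1 hg.disjoint F hF G hG,
      disjoint_iff_ne.1 hg.disjoint F hF L hL, hvF⟩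
  have hLFs := hg.mem_fs_iff_isLeaf.2 (isLeaf_of_isLeaf_erase (hg.mem_of_mem_gs hG) hcov hleaf)
  exact disjoint_left.1 hg.disjoint hLFs hL

theorem mem_fs_of_isGrafted_erase (hg : IsGrafted Δ Fs Gs) {F G : Finset α} (hF : F ∈ Fs)
    (hG : G ∈ Gs) (hFG : (F ∩ G).Nonempty) {Fs' Gs' : Finset (Finset α)}
    (hg' : IsGrafted (Δ.erase G) Fs' Gs') : F ∈ Fs' := by
  have hFΔ' : F ∈ Δ.erase G :=
    mem_erase.2 ⟨disjoint_iff_ne.1 hg.disjoint F hF G hG, hg.mem_of_mem_fs hF⟩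
  refine (mem_union.1 (hg'.eq_union ▸ hFΔ')).resolve_right fun hF' => ?_
  obtain ⟨v, hv⟩ := hFG
  obtain ⟨L, hL', hvL⟩ := hg'.exists_mem_fs hF' (mem_inter.1 hv).1
  have hLleaf := hg'.mem_fs_iff_isLeaf.1 hL'
  rcases mem_union.1 (hg.eq_union ▸ mem_of_mem_erase hLleaf.1) with hL | hL
  · have hLF := hg.inter_eq_empty hL hF (disjoint_iff_ne.1 hg'.disjoint L hL' F hF')
    exact notMem_empty v (hLF ▸ mem_inter.2 ⟨hvL, (mem_inter.1 hv).1⟩)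
  · exact hg.not_isLeaf_erase hG hL hLleaf

end IsGrafted

theorem IsGrafted.hasLeaf {Δ Fs Gs Γ : Finset (Finset α)} (hg : IsGrafted Δ Fs Gs) (hΓ : Γ ⊆ Δ)
    {F : Finset α} (hFΓ : F ∈ Γ) (hF : F ∈ Fs) : HasLeaf Γ := by
  obtain ⟨hFΔ, hsing | ⟨G, hGΔ, hGF, hdom⟩⟩ := hg.mem_fs_iff_isLeaf.1 hF
  · exact ⟨F, hFΓ, Or.inl ((Nonempty.subset_singleton_iff ⟨F, hFΓ⟩).1 (hsing ▸ hΓ))⟩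
  by_cases hGΓ : G ∈ Γ
  · exact ⟨F, hFΓ, Or.inr ⟨G, hGΓ, hGF, fun F' hF' hne => hdom F' (hΓ hF') hne⟩⟩
  rcases (F ∩ G).eq_empty_or_nonempty with hFG | hFG
  · refine ⟨F, isLeaf_of_forall_inter_eq_empty hFΓ fun F' hF' hne => ?_⟩
    exact subset_empty.1 (hFG ▸ hdom F' (hΓ hF') hne)
  have hG : G ∈ Gs := (mem_union.1 (hg.eq_union ▸ hGΔ)).resolve_left fun hG =>
    hFG.ne_empty (hg.inter_eq_empty hF hG hGF.symm)
  obtain ⟨Fs', Gs', hg'⟩ := hg.exists_isGrafted_erase hG ⟨hFΔ, hGΔ, hGF, hdom, hFG⟩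
  exact hg'.hasLeaf (subset_erase.2 ⟨hΓ, hGΓ⟩) hFΓ
    (hg.mem_fs_of_isGrafted_erase hF hG hFG hg')
termination_by Δ.card
decreasing_by exact card_erase_lt_of_mem hGΔ

/-- A grafting of a tree is a tree. -/
theorem grafting_of_tree_is_tree (Δ Fs Gs : Finset (Finset α))
    (hgraft : IsGrafted Δ Fs Gs) (htree : IsTree Gs)
    (hconn : ComplexConnected Δ) :
    IsTree Δ := by
  refine ⟨hconn, fun Γ hΓ hne => ?_⟩
  by_cases h : ∃ F ∈ Γ, F ∈ Fs
  · obtain ⟨F, hFΓ, hF⟩ := h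
    exact hgraft.hasLeaf hΓ hFΓ hF
  · push Not at h
    refine htree.2 Γ (fun X hX => ?_) hne
    exact (mem_union.1 (hgraft.eq_union ▸ hΓ hX)).resolve_left (h X hX)
end
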